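/- For any 2-input-2-output no-signaling correlation h satisfying Cabello's conditions h(0,1|0,1) = 0, h(1,0|1,0) = 0, and h(0,0|0,0) > h(0,0|1,1), the strategy matrix S with rows S(1,·) = (h(1,0|0,0), h(1,1|0,0), h(0,0|0,1), 0), S(2,·) = (0, h(1,1|1,0), h(0,0|1,1), h(0,1|1,1)), S(3,·) = (h(0,0|0,0)+h(1,0|0,0), h(0,1|0,0)+h(1,1|0,0), 0, 0), S(4,·) = (0, 0, h(0,0|1,1)+h(1,0|1,1), h(0,1|1,1)+h(1,1|1,1)) is row-stochastic, avoids the DMH' forbidden entries, and achieves expected payoff (1/4)(h(0,0|0,0) − h(0,0|1,1)) > 0 in the DMH' game. -/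
import Mathlib


def dmh'Forbidden : Finset (Fin 4 × Fin 4) :=
  {(0,3), (1,0), (2,2), (2,3), (3,0), (3,1)}

noncomputable def dmh'Payoff (S : Fin 4 → Fin 4 → ℝ) : ℝ :=
  (1/4) * (-(S 0 0) - S 1 2 + S 2 0)

/-- The strategy matrix built from a correlation h via the Cabello-assisted protocol. -/
noncomputable def cabelloStrategy (h : Fin 2 → Fin 2 → Fin 2 → Fin 2 → ℝ) :
    Fin 4 → Fin 4 → ℝ :=
  ![![h 1 0 0 0, h 1 1 0 0, h 0 0 0 1, 0],
    ![0, h 1 1 1 0, h 0 0 1 1, h 0 1 1 1],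
    ![h 0 0 0 0 + h 1 0 0 0, h 0 1 0 0 + h 1 1 0 0, 0, 0],
    ![0, 0, h 0 0 1 1 + h 1 0 1 1, h 0 1 1 1 + h 1 1 1 1]]

/-- for any no-signaling correlation satisfying Cabello's conditions,
the Cabello-assisted strategy matrix is row-stochastic, avoids the DMH' forbidden
entries and achieves expected payoff (1/4)(h(0,0|0,0) − h(0,0|1,1)) > 0. -/
theorem cabello_strategy_wins_dmh'
    (h : Fin 2 → Fin 2 → Fin 2 → Fin 2 → ℝ)
    (hpos : ∀ a b x y, 0 ≤ h a b x y)
    (hnorm : ∀ x y, ∑ a, ∑ b, h a b x y = 1)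
    (hnsA : ∀ a x y y', ∑ b, h a b x y = ∑ b, h a b x y')
    (hnsB : ∀ b y x x', ∑ a, h a b x y = ∑ a, h a b x' y)
    (hcab1 : h 0 1 0 1 = 0)
    (hcab2 : h 1 0 1 0 = 0)
    (hcab3 : h 0 0 1 1 < h 0 0 0 0) :
    (∀ m, ∑ z, cabelloStrategy h m z = 1) ∧
    (∀ p ∈ dmh'Forbidden, cabelloStrategy h p.1 p.2 = 0) ∧
    dmh'Payoff (cabelloStrategy h) = (1/4) * (h 0 0 0 0 - h 0 0 1 1) ∧
    0 < dmh'Payoff (cabelloStrategy h) := by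
  have n00 := hnorm 0 0
  have n11 := hnorm 1 1
  have a001 := hnsA 0 0 0 1
  have a110 := hnsA 1 1 1 0
  simp [Fin.sum_univ_two] at n00 n11 a001 a110
  refine ⟨?_, ?_, ?_, ?_⟩
  · intro m
    fin_cases m <;>
      simp [cabelloStrategy, Fin.sum_univ_four] <;> linarith
  · intro p hp
    fin_cases hp <;> simp [cabelloStrategy]
  · simp [dmh'Payoff, cabelloStrategy]; ring
  · simp [dmh'Payoff, cabelloStrategy]; linarith
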